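/- The infinite-concatenation map h : ewn(Σ)^ω → Σ^ω, equipping the countable set ewn(Σ) with the discrete topology and ewn(Σ)^ω with the product topology, is a homeomorphism onto the subspace of well-nested infinite strings of Σ^ω; in particular, if ewn(Σ) is countably infinite, the set of well-nested infinite strings with the subspace topology is homeomorphic to the Baire space ℕ^ℕ. -/

import Mathlib

/-- Classification of alphabet symbols: left bracket, right bracket, or neutral. -/
inductive Kind : Type
  | left | right | neutral
deriving DecidableEq

/-- The set of well-nested finite strings over an alphabet `A` classified by `k`. -/
inductive WN {A : Type} (k : A → Kind) : List A → Prop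
  | nil : WN k []
  | neutral (c : A) : k c = Kind.neutral → WN k [c]
  | append {u v : List A} : WN k u → WN k v → WN k (u ++ v)
  | enclose (l r : A) {u : List A} : k l = Kind.left → k r = Kind.right →
      WN k u → WN k (l :: u ++ [r])

/-- Elementary well-nested strings: a neutral symbol, or a well-nested string in brackets. -/
def EWN {A : Type} (k : A → Kind) : Set (List A) :=
  {w | (∃ c, k c = Kind.neutral ∧ w = [c]) ∨
       ∃ l r u, k l = Kind.left ∧ k r = Kind.right ∧ WN k u ∧ w = l :: u ++ [r]}

/-- `u` is a prefix of the infinite string `α`. -/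
def FunPrefix {A : Type} (u : List A) (α : ℕ → A) : Prop :=
  ∀ i : ℕ, ∀ h : i < u.length, u.get ⟨i, h⟩ = α i

/-- The infinite string `α` is the infinite concatenation of the finite strings `x 0, x 1, …`. -/
def Concats {A : Type} (x : ℕ → List A) (α : ℕ → A) : Prop :=
  ∀ n : ℕ, FunPrefix ((List.range n).flatMap x) α

/-- An infinite string is well-nested if it is an infinite concatenation of
elementary well-nested finite strings. -/
def WNomega {A : Type} (k : A → Kind) (α : ℕ → A) : Prop :=
  ∃ x : ℕ → List A, (∀ i, x i ∈ EWN k) ∧ Concats x α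

/-!
Inside an elementary word `l u r` the bracket balance stays positive until the final `r`, so
no proper prefix of an elementary word is elementary: `ewn(Σ)` is a prefix code. For a prefix
code, any finite sequence of codewords that is a prefix of a concatenation `α` is an initial
segment of the factorisation of `α`. Hence factorisations are unique, and the first `i`
factors of `α` only depend on a finite prefix of `α`, which makes decoding continuous;
encoding is continuous because the `n`-th letter only depends on the first `n + 1` factors.
The Baire space is the countable power of any countably infinite discrete space.
-/

open Filter Topology

section Balance

variable {A : Type} {k : A → Kind}

def bracketWeight (k : A → Kind) (c : A) : ℤ :=
  match k c with
  | Kind.left => 1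
  | Kind.right => -1
  | Kind.neutral => 0

def balance (k : A → Kind) (w : List A) : ℤ := (w.map (bracketWeight k)).sum

@[simp] lemma balance_nil : balance k [] = 0 := rfl

@[simp] lemma balance_cons (c : A) (w : List A) :
    balance k (c :: w) = bracketWeight k c + balance k w := by
  simp [balance]

@[simp] lemma balance_append (u v : List A) :
    balance k (u ++ v) = balance k u + balance k v := by
  simp [balance]

lemma WN.balance_eq_zero {u : List A} (h : WN k u) : balance k u = 0 := by
  induction h with
  | nil => rfl
  | neutral c hc => simp [bracketWeight, hc]
  | append _ _ ihu ihv => simp [ihu, ihv]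
  | enclose l r hl hr _ ih => simp [bracketWeight, hl, hr, ih]

lemma WN.balance_take_nonneg {u : List A} (h : WN k u) (n : ℕ) :
    0 ≤ balance k (u.take n) := by
  induction h generalizing n with
  | nil => simp
  | neutral c hc => cases n <;> simp [bracketWeight, hc]
  | append _ _ ihu ihv =>
    rw [List.take_append, balance_append]
    exact add_nonneg (ihu n) (ihv _)
  | @enclose l r u hl hr _ ih =>
    cases n with
    | zero => simp
    | succ n =>
      have hlast : -1 ≤ balance k ([r].take (n - u.length)) := by
        cases n - u.length <;> simp [bracketWeight, hr]
      have hu := ih n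
      simp only [List.cons_append, List.take_succ_cons, balance_cons, List.take_append,
        balance_append, bracketWeight, hl]
      omega

end Balance

section PrefixCode

variable {A : Type}

structure IsPrefixCode (C : Set (List A)) : Prop where
  nil_not_mem : [] ∉ C
  eq_of_prefix : ∀ ⦃u v⦄, u ∈ C → v ∈ C → u <+: v → u = v

lemma isPrefixCode_ewn (k : A → Kind) : IsPrefixCode (EWN k) where
  nil_not_mem := by rintro (⟨c, -, h⟩ | ⟨l, r, u, -, -, -, h⟩) <;> simp at h
  eq_of_prefix := by
    rintro _ _ (⟨c, hc, rfl⟩ | ⟨l, r, u, hl, hr, hu, rfl⟩)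
      (⟨c', hc', rfl⟩ | ⟨l', r', u', hl', hr', hu', rfl⟩) hp <;>
      simp only [List.cons_append, List.cons_prefix_cons] at hp
    · rw [hp.1]
    · rw [← hp.1, hc] at hl'
      cases hl'
    · rw [hp.1, hc'] at hl
      cases hl
    · obtain ⟨rfl, hp⟩ := hp
      rcases List.prefix_concat_iff.1 hp with h | h
      · simp [h]
      · have hneg := hu'.balance_take_nonneg (u ++ [r]).length
        rw [← List.prefix_iff_eq_take.1 h] at hneg
        simp [hu.balance_eq_zero, bracketWeight, hr] at hneg

end PrefixCode

section Concatenation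

variable {A : Type} {x y : ℕ → List A} {α β : ℕ → A} {u v : List A}

def partialConcat (x : ℕ → List A) (n : ℕ) : List A := (List.range n).flatMap x

lemma partialConcat_succ (x : ℕ → List A) (n : ℕ) :
    partialConcat x (n + 1) = partialConcat x n ++ x n := by
  simp [partialConcat, List.range_succ]

lemma partialConcat_prefix_of_le (x : ℕ → List A) {m n : ℕ} (h : m ≤ n) :
    partialConcat x m <+: partialConcat x n := by
  induction n, h using Nat.le_induction with
  | base => exact List.prefix_refl _
  | succ n _ ih => exact ih.trans (partialConcat_succ x n ▸ List.prefix_append _ _)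

lemma partialConcat_congr {n : ℕ} (h : ∀ m < n, x m = y m) :
    partialConcat x n = partialConcat y n := by
  induction n with
  | zero => rfl
  | succ n ih =>
    rw [partialConcat_succ, partialConcat_succ, ih fun m hm => h m (by omega), h n n.lt_succ_self]

lemma le_length_partialConcat (hx : ∀ i, x i ≠ []) (n : ℕ) :
    n ≤ (partialConcat x n).length := by
  induction n with
  | zero => simp
  | succ n ih =>
    rw [partialConcat_succ, List.length_append]
    have := List.length_pos_iff.2 (hx n)
    omega

lemma funPrefix_append :
    FunPrefix (u ++ v) α ↔ FunPrefix u α ∧ FunPrefix v fun i => α (u.length + i) := by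
  simp only [FunPrefix, List.get_eq_getElem, List.length_append]
  refine ⟨fun h => ⟨fun i hi => ?_, fun i hi => ?_⟩, fun ⟨hu, hv⟩ i hi => ?_⟩
  · rw [← h i (by omega), List.getElem_append_left hi]
  · rw [← h (u.length + i) (by omega), List.getElem_append_right (by omega)]
    simp
  · rcases lt_or_ge i u.length with hiu | hiu
    · rw [List.getElem_append_left hiu, hu i hiu]
    · rw [List.getElem_append_right hiu, hv (i - u.length) (by omega)]
      congr 1
      omega

lemma FunPrefix.prefix_of_length_le (hu : FunPrefix u α) (hv : FunPrefix v α)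
    (h : u.length ≤ v.length) : u <+: v :=
  List.prefix_iff_getElem.2 ⟨h, fun i hi => (hu i hi).trans (hv i (by omega)).symm⟩

lemma FunPrefix.of_eqOn (hu : FunPrefix u α) (h : ∀ i < u.length, α i = β i) :
    FunPrefix u β :=
  fun i hi => (hu i hi).trans (h i hi)

lemma Concats.funPrefix_partialConcat (h : Concats x α) (n : ℕ) :
    FunPrefix (partialConcat x n) α :=
  h n

lemma Concats.funPrefix (h : Concats x α) (n : ℕ) :
    FunPrefix (x n) fun i => α ((partialConcat x n).length + i) :=
  (funPrefix_append.1 (partialConcat_succ x n ▸ h.funPrefix_partialConcat (n + 1))).2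

lemma Concats.unique (hx : ∀ i, x i ≠ []) (hα : Concats x α) (hβ : Concats x β) :
    α = β := by
  funext n
  have hn : n < (partialConcat x (n + 1)).length := le_length_partialConcat hx (n + 1)
  exact (hα (n + 1) n hn).symm.trans (hβ (n + 1) n hn)

def concat (x : ℕ → List A) (hx : ∀ i, x i ≠ []) (n : ℕ) : A :=
  (partialConcat x (n + 1))[n]'(le_length_partialConcat hx (n + 1))

lemma concats_concat (hx : ∀ i, x i ≠ []) : Concats x (concat x hx) := by
  intro n i hi
  rw [List.get_eq_getElem, concat]
  rcases le_total n (i + 1) with h | h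
  · exact (partialConcat_prefix_of_le x h).getElem hi
  · exact ((partialConcat_prefix_of_le x h).getElem _).symm

lemma concat_congr (hx : ∀ i, x i ≠ []) (hy : ∀ i, y i ≠ []) {n : ℕ}
    (h : ∀ i < n + 1, x i = y i) : concat x hx n = concat y hy n :=
  List.getElem_of_eq (partialConcat_congr h) _

end Concatenation

def omegaPower {A : Type} (C : Set (List A)) : Set (ℕ → A) :=
  {α | ∃ x : ℕ → List A, (∀ i, x i ∈ C) ∧ Concats x α}

noncomputable def factors {A : Type} {C : Set (List A)} (α : omegaPower C) : ℕ → C :=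
  fun i => ⟨α.2.choose i, α.2.choose_spec.1 i⟩

lemma concats_factors {A : Type} {C : Set (List A)} (α : omegaPower C) :
    Concats (fun i => factors α i) α.1 :=
  α.2.choose_spec.2

lemma eventually_forall_lt_eq {Z Y : Type*} [TopologicalSpace Z] [TopologicalSpace Y]
    [DiscreteTopology Y] {g : ℕ → Z → Y} (hg : ∀ j, Continuous (g j)) (z : Z) (N : ℕ) :
    ∀ᶠ z' in 𝓝 z, ∀ j < N, g j z' = g j z :=
  (eventually_all_finite (Set.finite_lt_nat N)).2 fun j _ =>
    (hg j).tendsto z (mem_nhds_discrete.2 (Set.mem_singleton (g j z)))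

namespace IsPrefixCode

variable {A : Type} {C : Set (List A)} (hC : IsPrefixCode C)
  {x y : ℕ → List A} {α β : ℕ → A} {u v : List A}
include hC

lemma ne_nil (hu : u ∈ C) : u ≠ [] := by
  rintro rfl
  exact hC.nil_not_mem hu

lemma coe_ne_nil (x : ℕ → C) (i : ℕ) : (x i : List A) ≠ [] :=
  hC.ne_nil (x i).2

lemma eq_of_funPrefix (hu : u ∈ C) (hv : v ∈ C) (hu' : FunPrefix u α) (hv' : FunPrefix v α) :
    u = v := by
  rcases le_total u.length v.length with h | h
  · exact hC.eq_of_prefix hu hv (hu'.prefix_of_length_le hv' h)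
  · exact (hC.eq_of_prefix hv hu (hv'.prefix_of_length_le hu' h)).symm

lemma eq_of_funPrefix_partialConcat (hx : ∀ i, x i ∈ C) (hy : ∀ i, y i ∈ C)
    (hβ : Concats y β) {n : ℕ} (h : FunPrefix (partialConcat x n) β) :
    ∀ j < n, x j = y j := by
  induction n with
  | zero => intro j hj; omega
  | succ n ih =>
    rw [partialConcat_succ, funPrefix_append] at h
    have hlt := ih h.1
    have hn : x n = y n := by
      refine hC.eq_of_funPrefix (hx n) (hy n) ?_ (hβ.funPrefix n)
      rw [← partialConcat_congr hlt]
      exact h.2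
    intro j hj
    rcases Nat.lt_succ_iff_lt_or_eq.1 hj with hj | rfl
    exacts [hlt j hj, hn]

lemma eq_of_concats (hx : ∀ i, x i ∈ C) (hy : ∀ i, y i ∈ C) (hxα : Concats x α)
    (hyα : Concats y α) : x = y :=
  funext fun j => hC.eq_of_funPrefix_partialConcat hx hy hyα (hxα (j + 1)) j j.lt_succ_self

def encode (x : ℕ → C) : omegaPower C :=
  ⟨concat (fun i => x i) (hC.coe_ne_nil x), fun i => x i, fun i => (x i).2,
    concats_concat _⟩

lemma factors_encode (x : ℕ → C) : factors (hC.encode x) = x :=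
  funext fun i => Subtype.ext <| congrFun (hC.eq_of_concats (fun i => (factors _ i).2)
    (fun i => (x i).2) (concats_factors _) (concats_concat (hC.coe_ne_nil x))) i

lemma encode_factors (α : omegaPower C) : hC.encode (factors α) = α :=
  Subtype.ext <| (concats_concat (hC.coe_ne_nil _)).unique (hC.coe_ne_nil (factors α))
    (concats_factors α)

variable [TopologicalSpace A] [TopologicalSpace (List A)]

lemma continuous_encode [DiscreteTopology (List A)] : Continuous hC.encode := by
  refine continuous_induced_rng.2 <| continuous_pi fun n => IsLocallyConstant.continuous <|
    (IsLocallyConstant.iff_eventually_eq _).2 fun x => ?_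
  filter_upwards [eventually_forall_lt_eq continuous_apply x (n + 1)] with y hy
  exact concat_congr (hC.coe_ne_nil y) (hC.coe_ne_nil x) fun i hi =>
    congrArg Subtype.val (hy i hi)

lemma continuous_factors [DiscreteTopology A] : Continuous (factors (C := C)) := by
  refine continuous_pi fun i => IsLocallyConstant.continuous <|
    (IsLocallyConstant.iff_eventually_eq _).2 fun α => ?_
  -- The first `i + 1` factors of `α` are read off its first `N` letters.
  set N := (partialConcat (fun j => (factors α j : List A)) (i + 1)).length
  filter_upwards [eventually_forall_lt_eq (fun j => (continuous_apply j).comp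
    continuous_subtype_val) α N] with β hβ
  have hprefix : FunPrefix (partialConcat (fun j => (factors α j : List A)) (i + 1)) β :=
    ((concats_factors α).funPrefix_partialConcat (i + 1)).of_eqOn fun j hj => (hβ j hj).symm
  exact Subtype.ext (hC.eq_of_funPrefix_partialConcat (fun j => (factors α j).2)
    (fun j => (factors β j).2) (concats_factors β) hprefix i i.lt_succ_self).symm

noncomputable def concatHomeomorph [DiscreteTopology A] [DiscreteTopology (List A)] :
    (ℕ → C) ≃ₜ omegaPower C where
  toFun := hC.encode
  invFun := factors
  left_inv := hC.factors_encode
  right_inv := hC.encode_factors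
  continuous_toFun := hC.continuous_encode
  continuous_invFun := hC.continuous_factors

end IsPrefixCode

lemma nonempty_pi_nat_homeomorph_baire (S : Type*) [TopologicalSpace S] [DiscreteTopology S]
    [Countable S] [Infinite S] : Nonempty ((ℕ → S) ≃ₜ (ℕ → ℕ)) := by
  obtain ⟨_⟩ := nonempty_denumerable S
  exact ⟨Homeomorph.piCongrRight fun _ => (Denumerable.eqv S).toHomeomorphOfDiscrete⟩

theorem wnomega_homeomorphic_to_product_and_baire
    {A : Type} [TopologicalSpace A] [DiscreteTopology A]
    [TopologicalSpace (List A)] [DiscreteTopology (List A)]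
    (k : A → Kind) :
    ∃ h : (ℕ → {w : List A // w ∈ EWN k}) ≃ₜ {α : ℕ → A // WNomega k α},
      (∀ x : ℕ → {w : List A // w ∈ EWN k},
        Concats (fun i => (x i).1) (h x).1) ∧
      (Countable {w : List A // w ∈ EWN k} → Infinite {w : List A // w ∈ EWN k} →
        Nonempty ({α : ℕ → A // WNomega k α} ≃ₜ (ℕ → ℕ))) := by
  have hC := isPrefixCode_ewn k
  -- `{α // WNomega k α}` is `omegaPower (EWN k)` unfolded.
  refine ⟨hC.concatHomeomorph, fun x => concats_concat (hC.coe_ne_nil x), fun _ _ => ?_⟩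
  obtain ⟨e⟩ := nonempty_pi_nat_homeomorph_baire {w : List A // w ∈ EWN k}
  exact ⟨hC.concatHomeomorph.symm.trans e⟩
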